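/- arXiv:2311.00673 — 4 statements merged into one kernel-verified Lean document; each statement's English description precedes it below -/
import Mathlib

section
/- Suppose the historical data are generated by the system Σ and the Assumption holds (the stacked matrix [U_p; D_p; X_p] has full row rank m + r + n). Then for every z ∈ ℂ, rank [z·X_p − X_f; U_p; Y_p] = m + rank [−E, z·I_n − A; 0, C] (ranks over ℂ). Consequently, the condition rank [z·X_p − X_f; U_p; Y_p] = n + m + r for all z ∈ ℂ with |z| ≥ 1 holds if and only if rank [z·I_n − A, −E; C, 0] = n + r for all z ∈ ℂ with |z| ≥ 1. -/
open Matrix Filter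

noncomputable section

/-- A real square matrix is *Schur stable* if all of its complex eigenvalues
have modulus strictly less than `1`. -/
def SchurStable {n : ℕ} (M : Matrix (Fin n) (Fin n) ℝ) : Prop :=
  ∀ μ ∈ spectrum ℂ (M.map Complex.ofReal), ‖μ‖ < 1

/-- `(u, y, x, d)` is a trajectory of the system `Σ`:
`x(t+1) = A x(t) + B u(t) + E d(t)`, `y(t) = C x(t)`. -/
def IsSysTraj {n m p r : ℕ} (A : Matrix (Fin n) (Fin n) ℝ) (B : Matrix (Fin n) (Fin m) ℝ)
    (E : Matrix (Fin n) (Fin r) ℝ) (C : Matrix (Fin p) (Fin n) ℝ)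
    (u : ℕ → Fin m → ℝ) (y : ℕ → Fin p → ℝ) (x : ℕ → Fin n → ℝ) (d : ℕ → Fin r → ℝ) : Prop :=
  ∀ t : ℕ, x (t + 1) = A.mulVec (x t) + B.mulVec (u t) + E.mulVec (d t) ∧ y t = C.mulVec (x t)

/-- `(u, y, x̂, z)` is a trajectory of the candidate observer `Σ̂`:
`z(t+1) = A_UIO z(t) + B^u_UIO u(t) + B^y_UIO y(t)`, `x̂(t) = z(t) + D_UIO y(t)`. -/
def IsObsTraj {n m p : ℕ} (Auio : Matrix (Fin n) (Fin n) ℝ) (Bu : Matrix (Fin n) (Fin m) ℝ)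
    (By Duio : Matrix (Fin n) (Fin p) ℝ)
    (u : ℕ → Fin m → ℝ) (y : ℕ → Fin p → ℝ) (xhat : ℕ → Fin n → ℝ) (z : ℕ → Fin n → ℝ) : Prop :=
  ∀ t : ℕ, z (t + 1) = Auio.mulVec (z t) + Bu.mulVec (u t) + By.mulVec (y t) ∧
    xhat t = z t + Duio.mulVec (y t)

/-- `Σ̂` (given by `Auio, Bu, By, Duio`) is an unknown-input observer for `Σ`:
the estimation error `x - x̂` tends to `0` for every choice of initial conditions,
input signal, and unknown input. -/
def IsUIO {n m p r : ℕ} (A : Matrix (Fin n) (Fin n) ℝ) (B : Matrix (Fin n) (Fin m) ℝ)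
    (E : Matrix (Fin n) (Fin r) ℝ) (C : Matrix (Fin p) (Fin n) ℝ)
    (Auio : Matrix (Fin n) (Fin n) ℝ) (Bu : Matrix (Fin n) (Fin m) ℝ)
    (By Duio : Matrix (Fin n) (Fin p) ℝ) : Prop :=
  ∀ (u : ℕ → Fin m → ℝ) (y : ℕ → Fin p → ℝ) (x : ℕ → Fin n → ℝ) (d : ℕ → Fin r → ℝ)
    (xhat z : ℕ → Fin n → ℝ),
    IsSysTraj A B E C u y x d → IsObsTraj Auio Bu By Duio u y xhat z →
    Tendsto (fun t => x t - xhat t) atTop (nhds 0)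

/-- The set `T_Σ` of input/output/state trajectories of `Σ`. -/
def TSigma {n m p r : ℕ} (A : Matrix (Fin n) (Fin n) ℝ) (B : Matrix (Fin n) (Fin m) ℝ)
    (E : Matrix (Fin n) (Fin r) ℝ) (C : Matrix (Fin p) (Fin n) ℝ) :
    Set ((ℕ → Fin m → ℝ) × (ℕ → Fin p → ℝ) × (ℕ → Fin n → ℝ)) :=
  {w | ∃ d, IsSysTraj A B E C w.1 w.2.1 w.2.2 d}

/-- The set `T_Σ̂` of input/output/output-estimate trajectories of the observer `Σ̂`. -/
def TObs {n m p : ℕ} (Auio : Matrix (Fin n) (Fin n) ℝ) (Bu : Matrix (Fin n) (Fin m) ℝ)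
    (By Duio : Matrix (Fin n) (Fin p) ℝ) :
    Set ((ℕ → Fin m → ℝ) × (ℕ → Fin p → ℝ) × (ℕ → Fin n → ℝ)) :=
  {w | ∃ z, IsObsTraj Auio Bu By Duio w.1 w.2.1 w.2.2 z}

/-- "Past" data matrix: columns `v(0), …, v(N-1)`  (here `N = T - 1`). -/
def pastMat {k : ℕ} (N : ℕ) (v : ℕ → Fin k → ℝ) : Matrix (Fin k) (Fin N) ℝ :=
  Matrix.of fun i j => v j.val i

/-- "Future" data matrix: columns `v(1), …, v(N)`  (here `N = T - 1`). -/
def futMat {k : ℕ} (N : ℕ) (v : ℕ → Fin k → ℝ) : Matrix (Fin k) (Fin N) ℝ :=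
  Matrix.of fun i j => v (j.val + 1) i

/-- The historical data `(u_d, d_d, x_d, y_d)` on the time window `[0, N]`
(`N = T - 1`) are generated by the system `Σ`. -/
def GeneratedBy {n m p r : ℕ} (A : Matrix (Fin n) (Fin n) ℝ) (B : Matrix (Fin n) (Fin m) ℝ)
    (E : Matrix (Fin n) (Fin r) ℝ) (C : Matrix (Fin p) (Fin n) ℝ) (N : ℕ)
    (ud : ℕ → Fin m → ℝ) (dd : ℕ → Fin r → ℝ) (xd : ℕ → Fin n → ℝ) (yd : ℕ → Fin p → ℝ) :
    Prop :=
  (∀ t < N, xd (t + 1) = A.mulVec (xd t) + B.mulVec (ud t) + E.mulVec (dd t)) ∧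
  (∀ t ≤ N, yd t = C.mulVec (xd t))

/-- The triple `(A, E, C)` is *strong\* detectable*: for every trajectory of
`x(t+1) = A x(t) + E d(t)`, `y(t) = C x(t)` (zero known input),
`y(t) → 0` implies `x(t) → 0`. -/
def StrongStarDetectable {n p r : ℕ} (A : Matrix (Fin n) (Fin n) ℝ)
    (E : Matrix (Fin n) (Fin r) ℝ) (C : Matrix (Fin p) (Fin n) ℝ) : Prop :=
  ∀ (x : ℕ → Fin n → ℝ) (d : ℕ → Fin r → ℝ),
    (∀ t : ℕ, x (t + 1) = A.mulVec (x t) + E.mulVec (d t)) →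
    Tendsto (fun t => C.mulVec (x t)) atTop (nhds 0) →
    Tendsto x atTop (nhds 0)

/-- The set `T_c(u_d, y_d, x_d)` of trajectories compatible with the historical data:
for every `t`, the stacked vector `(u(t), y(t), x(t), x(t+1))` lies in the column
space of the stacked data matrix `[U_p; Y_p; X_p; X_f]`. -/
def TComp {n m p : ℕ} (N : ℕ) (Up : Matrix (Fin m) (Fin N) ℝ) (Yp : Matrix (Fin p) (Fin N) ℝ)
    (Xp Xf : Matrix (Fin n) (Fin N) ℝ) :
    Set ((ℕ → Fin m → ℝ) × (ℕ → Fin p → ℝ) × (ℕ → Fin n → ℝ)) :=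
  {w | ∀ t : ℕ, ∃ g : Fin N → ℝ, w.1 t = Up.mulVec g ∧ w.2.1 t = Yp.mulVec g ∧
    w.2.2 t = Xp.mulVec g ∧ w.2.2 (t + 1) = Xf.mulVec g}

section RankAux

variable {l l' m' n' m₁ m₂ n₁ n₂ : Type*}

/-- Reindexing the rows of a matrix by an equivalence preserves the rank. -/
private lemma rank_submatrix_equiv_id [Fintype l] [Fintype m'] [Fintype n']
    (A : Matrix m' n' ℂ) (e : l ≃ m') :
    (A.submatrix e id).rank = A.rank := by
  have h : (A.submatrix (e : l → m') (id : n' → n')).mulVecLin =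
      (LinearEquiv.funCongrLeft ℂ ℂ e).toLinearMap ∘ₗ A.mulVecLin := by
    ext v i
    rfl
  rw [Matrix.rank, h, LinearMap.range_comp, LinearEquiv.finrank_map_eq, Matrix.rank]

/-- Reindexing the columns of a matrix by an equivalence preserves the rank. -/
private lemma rank_id_submatrix_equiv [Fintype l] [Fintype m'] [Fintype n']
    (A : Matrix m' n' ℂ) (e : l ≃ n') :
    (A.submatrix id e).rank = A.rank := by
  have h : (A.submatrix (id : m' → m') (e : l → n')).mulVecLin =
      A.mulVecLin ∘ₗ (LinearEquiv.funCongrLeft ℂ ℂ e.symm).toLinearMap := by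
    ext v i
    simp only [LinearMap.coe_comp, Function.comp_apply, LinearEquiv.coe_coe,
      LinearEquiv.funCongrLeft_apply, Matrix.mulVecLin_apply]
    simp only [Matrix.mulVec, Matrix.submatrix_apply, dotProduct, LinearMap.funLeft_apply]
    exact Fintype.sum_equiv e _ _ (fun j => by simp)
  rw [Matrix.rank, h, LinearMap.range_comp, LinearEquiv.range, Submodule.map_top, Matrix.rank]

private lemma range_prodMap {M M₂ M₃ M₄ : Type*} [AddCommGroup M] [AddCommGroup M₂]
    [AddCommGroup M₃] [AddCommGroup M₄] [Module ℂ M] [Module ℂ M₂] [Module ℂ M₃] [Module ℂ M₄]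
    (f : M →ₗ[ℂ] M₃) (g : M₂ →ₗ[ℂ] M₄) :
    LinearMap.range (f.prodMap g) = (LinearMap.range f).prod (LinearMap.range g) := by
  apply le_antisymm
  · rintro ⟨a, b⟩ ⟨⟨x, y⟩, h⟩
    rw [LinearMap.prodMap_apply] at h
    exact ⟨⟨x, (Prod.ext_iff.1 h).1⟩, ⟨y, (Prod.ext_iff.1 h).2⟩⟩
  · rintro ⟨a, b⟩ ⟨⟨x, hx⟩, ⟨y, hy⟩⟩
    exact ⟨(x, y), by simp [hx, hy]⟩

private lemma finrank_submodule_prod {M M₂ : Type*} [AddCommGroup M] [AddCommGroup M₂]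
    [Module ℂ M] [Module ℂ M₂] [FiniteDimensional ℂ M] [FiniteDimensional ℂ M₂]
    (p : Submodule ℂ M) (q : Submodule ℂ M₂) :
    Module.finrank ℂ (p.prod q) = Module.finrank ℂ p + Module.finrank ℂ q := by
  have hinf : (p.map (LinearMap.inl ℂ M M₂)) ⊓ (q.map (LinearMap.inr ℂ M M₂)) = ⊥ := by
    rw [eq_bot_iff]
    rintro ⟨a, b⟩ ⟨⟨x, -, hx⟩, ⟨y, -, hy⟩⟩
    rw [LinearMap.inl_apply, Prod.ext_iff] at hx
    rw [LinearMap.inr_apply, Prod.ext_iff] at hy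
    simp only [Submodule.mem_bot, Prod.mk_eq_zero]
    exact ⟨hy.1.symm, hx.2.symm⟩
  have h1 : Module.finrank ℂ (p.map (LinearMap.inl ℂ M M₂)) = Module.finrank ℂ p :=
    (Submodule.equivMapOfInjective _ LinearMap.inl_injective p).finrank_eq.symm
  have h2 : Module.finrank ℂ (q.map (LinearMap.inr ℂ M M₂)) = Module.finrank ℂ q :=
    (Submodule.equivMapOfInjective _ LinearMap.inr_injective q).finrank_eq.symm
  have hsup := Submodule.finrank_sup_add_finrank_inf_eq
    (p.map (LinearMap.inl ℂ M M₂)) (q.map (LinearMap.inr ℂ M M₂))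
  rw [hinf, finrank_bot, add_zero, h1, h2] at hsup
  rw [LinearMap.prod_eq_sup_map, hsup]

/-- The rank of a block-diagonal matrix is the sum of the ranks of the blocks. -/
private lemma rank_fromBlocks_diag [Fintype m₁] [Fintype m₂] [Fintype n₁] [Fintype n₂]
    (A : Matrix m₁ n₁ ℂ) (D : Matrix m₂ n₂ ℂ) :
    (Matrix.fromBlocks A 0 0 D).rank = A.rank + D.rank := by
  classical
  have h : (Matrix.fromBlocks A 0 0 D).mulVecLin =
      (LinearEquiv.sumArrowLequivProdArrow m₁ m₂ ℂ ℂ).symm.toLinearMap ∘ₗ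
        ((A.mulVecLin.prodMap D.mulVecLin) ∘ₗ
          (LinearEquiv.sumArrowLequivProdArrow n₁ n₂ ℂ ℂ).toLinearMap) := by
    refine LinearMap.ext fun v => ?_
    have hv : v = Sum.elim (v ∘ Sum.inl) (v ∘ Sum.inr) := (Sum.elim_comp_inl_inr v).symm
    simp only [LinearMap.coe_comp, Function.comp_apply, LinearEquiv.coe_coe,
      Matrix.mulVecLin_apply]
    rw [hv, Matrix.fromBlocks_mulVec]
    funext i
    cases i <;>
      simp [LinearEquiv.sumArrowLequivProdArrow, Equiv.sumArrowEquivProdArrow,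
        LinearMap.prodMap_apply]
  rw [Matrix.rank, h, LinearMap.range_comp, LinearEquiv.finrank_map_eq,
    LinearMap.range_comp, LinearEquiv.range, Submodule.map_top, range_prodMap,
    finrank_submodule_prod, Matrix.rank, Matrix.rank]

/-- A real matrix of full row rank admits a right inverse. -/
private lemma exists_right_inverse_of_rank {k : Type*} [Fintype k] [DecidableEq k] {N : ℕ}
    (W : Matrix k (Fin N) ℝ) (hW : W.rank = Fintype.card k) :
    ∃ G : Matrix (Fin N) k ℝ, W * G = 1 := by
  have hsurj : Function.Surjective W.mulVecLin := by
    rw [← LinearMap.range_eq_top]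
    apply Submodule.eq_top_of_finrank_eq
    rw [Module.finrank_pi]
    exact hW
  choose g hg using hsurj
  refine ⟨Matrix.of fun j i => g (Pi.single i 1) j, ?_⟩
  ext i k'
  rw [Matrix.mul_apply]
  simp only [Matrix.of_apply]
  rw [show ∑ j, W i j * g (Pi.single k' 1) j = W.mulVecLin (g (Pi.single k' 1)) i from rfl,
    hg]
  simp [Matrix.one_apply, Pi.single_apply]

end RankAux

/-- Under the Assumption, for every `z ∈ ℂ`,
`rank [z X_p - X_f; U_p; Y_p] = m + rank [-E, z I - A; 0, C]`; consequently
`rank [z X_p - X_f; U_p; Y_p] = n + m + r` for all `|z| ≥ 1` if and only if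
`rank [z I - A, -E; C, 0] = n + r` for all `|z| ≥ 1` (ranks over `ℂ`). -/
theorem statement16 {n m p r N : ℕ}
    (A : Matrix (Fin n) (Fin n) ℝ) (B : Matrix (Fin n) (Fin m) ℝ)
    (E : Matrix (Fin n) (Fin r) ℝ) (C : Matrix (Fin p) (Fin n) ℝ)
    (hE : E.rank = r)
    (ud : ℕ → Fin m → ℝ) (dd : ℕ → Fin r → ℝ) (xd : ℕ → Fin n → ℝ) (yd : ℕ → Fin p → ℝ)
    (hdata : GeneratedBy A B E C N ud dd xd yd)
    (hAssumption : (Matrix.fromRows (pastMat N ud)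
      (Matrix.fromRows (pastMat N dd) (pastMat N xd))).rank = m + r + n) :
    (∀ z : ℂ,
      (Matrix.fromRows
        (z • (pastMat N xd).map Complex.ofReal - (futMat N xd).map Complex.ofReal)
        (Matrix.fromRows ((pastMat N ud).map Complex.ofReal)
          ((pastMat N yd).map Complex.ofReal))).rank =
      m + (Matrix.fromBlocks (-(E.map Complex.ofReal))
        (z • (1 : Matrix (Fin n) (Fin n) ℂ) - A.map Complex.ofReal)
        0 (C.map Complex.ofReal)).rank) ∧
    ((∀ z : ℂ, 1 ≤ ‖z‖ →
        (Matrix.fromRows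
          (z • (pastMat N xd).map Complex.ofReal - (futMat N xd).map Complex.ofReal)
          (Matrix.fromRows ((pastMat N ud).map Complex.ofReal)
            ((pastMat N yd).map Complex.ofReal))).rank = n + m + r) ↔
      (∀ z : ℂ, 1 ≤ ‖z‖ →
        (Matrix.fromBlocks
          (z • (1 : Matrix (Fin n) (Fin n) ℂ) - A.map Complex.ofReal)
          (-(E.map Complex.ofReal)) (C.map Complex.ofReal) 0).rank = n + r)) := by
  classical
  -- data identities over ℝ
  have h1 : futMat N xd = A * pastMat N xd + B * pastMat N ud + E * pastMat N dd := by
    ext i j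
    have hx := hdata.1 j.1 j.2
    simp only [futMat, pastMat, Matrix.of_apply, Matrix.add_apply, Matrix.mul_apply]
    rw [hx]
    simp [Matrix.mulVec, dotProduct]
  have h2 : pastMat N yd = C * pastMat N xd := by
    ext i j
    have hy := hdata.2 j.1 (le_of_lt j.2)
    simp only [pastMat, Matrix.of_apply, Matrix.mul_apply]
    rw [hy]
    simp [Matrix.mulVec, dotProduct]
  -- complex versions
  have h1c : (futMat N xd).map Complex.ofReal =
      A.map Complex.ofReal * (pastMat N xd).map Complex.ofReal +
      B.map Complex.ofReal * (pastMat N ud).map Complex.ofReal +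
      E.map Complex.ofReal * (pastMat N dd).map Complex.ofReal := by
    ext i j
    simp only [Matrix.map_apply, Matrix.add_apply, Matrix.mul_apply]
    rw [show futMat N xd i j =
      (A * pastMat N xd + B * pastMat N ud + E * pastMat N dd) i j from by rw [h1]]
    simp only [Matrix.add_apply, Matrix.mul_apply]
    push_cast
    rfl
  have h2c : (pastMat N yd).map Complex.ofReal =
      C.map Complex.ofReal * (pastMat N xd).map Complex.ofReal := by
    ext i j
    simp only [Matrix.map_apply, Matrix.mul_apply]
    rw [show pastMat N yd i j = (C * pastMat N xd) i j from by rw [h2]]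
    simp only [Matrix.mul_apply]
    push_cast
    rfl
  -- a right inverse of the stacked data matrix
  have hWrank : (Matrix.fromRows (pastMat N ud)
      (Matrix.fromRows (pastMat N dd) (pastMat N xd))).rank
      = Fintype.card (Fin m ⊕ (Fin r ⊕ Fin n)) := by
    rw [hAssumption]
    simp only [Fintype.card_sum, Fintype.card_fin]
    omega
  obtain ⟨G, hG⟩ := exists_right_inverse_of_rank _ hWrank
  have hWGc : Matrix.fromRows ((pastMat N ud).map Complex.ofReal)
      (Matrix.fromRows ((pastMat N dd).map Complex.ofReal)
        ((pastMat N xd).map Complex.ofReal)) * G.map Complex.ofReal = 1 := by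
    have hW'eq : Matrix.fromRows ((pastMat N ud).map Complex.ofReal)
        (Matrix.fromRows ((pastMat N dd).map Complex.ofReal)
          ((pastMat N xd).map Complex.ofReal)) =
        (Matrix.fromRows (pastMat N ud)
          (Matrix.fromRows (pastMat N dd) (pastMat N xd))).map Complex.ofReal := by
      ext i j
      rcases i with i | i | i <;> rfl
    rw [hW'eq]
    ext i j
    have hij : ((Matrix.fromRows (pastMat N ud)
        (Matrix.fromRows (pastMat N dd) (pastMat N xd))) * G) i j
        = (1 : Matrix (Fin m ⊕ (Fin r ⊕ Fin n)) (Fin m ⊕ (Fin r ⊕ Fin n)) ℝ) i j := by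
      rw [hG]
    have hone : ((1 : Matrix (Fin m ⊕ (Fin r ⊕ Fin n)) (Fin m ⊕ (Fin r ⊕ Fin n)) ℝ).map
        Complex.ofReal) = 1 := Matrix.map_one _ Complex.ofReal_zero Complex.ofReal_one
    rw [← hone]
    simp only [Matrix.mul_apply, Matrix.map_apply]
    rw [← hij, Matrix.mul_apply]
    push_cast
    rfl
  -- the key rank identity
  have key : ∀ z : ℂ,
      (Matrix.fromRows
        (z • (pastMat N xd).map Complex.ofReal - (futMat N xd).map Complex.ofReal)
        (Matrix.fromRows ((pastMat N ud).map Complex.ofReal)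
          ((pastMat N yd).map Complex.ofReal))).rank =
      m + (Matrix.fromBlocks (-(E.map Complex.ofReal))
        (z • (1 : Matrix (Fin n) (Fin n) ℂ) - A.map Complex.ofReal)
        0 (C.map Complex.ofReal)).rank := by
    intro z
    set A' := A.map Complex.ofReal with hA'
    set B' := B.map Complex.ofReal with hB'
    set E' := E.map Complex.ofReal with hE'
    set C' := C.map Complex.ofReal with hC'
    set Up' := (pastMat N ud).map Complex.ofReal with hUp'
    set Dp' := (pastMat N dd).map Complex.ofReal with hDp'
    set Xp' := (pastMat N xd).map Complex.ofReal with hXp'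
    set Yp' := (pastMat N yd).map Complex.ofReal with hYp'
    set Xf' := (futMat N xd).map Complex.ofReal with hXf'
    set Z' := z • (1 : Matrix (Fin n) (Fin n) ℂ) - A' with hZ'
    set W' := Matrix.fromRows Up' (Matrix.fromRows Dp' Xp') with hW'
    set M₁ := Matrix.fromCols (-B') (Matrix.fromCols (-E') Z') with hM₁
    set M₂ := Matrix.fromCols (1 : Matrix (Fin m) (Fin m) ℂ)
      (Matrix.fromCols (0 : Matrix (Fin m) (Fin r) ℂ) (0 : Matrix (Fin m) (Fin n) ℂ)) with hM₂
    set M₃ := Matrix.fromCols (0 : Matrix (Fin p) (Fin m) ℂ)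
      (Matrix.fromCols (0 : Matrix (Fin p) (Fin r) ℂ) C') with hM₃
    set K := Matrix.fromBlocks (-E') Z' 0 C' with hK
    -- factorization
    have e1 : M₁ * W' = z • Xp' - Xf' := by
      rw [hM₁, hW', Matrix.fromCols_mul_fromRows, Matrix.fromCols_mul_fromRows, h1c,
        hZ', Matrix.sub_mul, Matrix.smul_mul, Matrix.one_mul, Matrix.neg_mul, Matrix.neg_mul]
      abel
    have e2 : M₂ * W' = Up' := by
      rw [hM₂, hW', Matrix.fromCols_mul_fromRows, Matrix.fromCols_mul_fromRows,
        Matrix.one_mul, Matrix.zero_mul, Matrix.zero_mul, add_zero, add_zero]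
    have e3 : M₃ * W' = Yp' := by
      rw [hM₃, hW', Matrix.fromCols_mul_fromRows, Matrix.fromCols_mul_fromRows,
        Matrix.zero_mul, Matrix.zero_mul, zero_add, zero_add]
      exact h2c.symm
    have hfact : Matrix.fromRows M₁ (Matrix.fromRows M₂ M₃) * W' =
        Matrix.fromRows (z • Xp' - Xf') (Matrix.fromRows Up' Yp') := by
      rw [Matrix.fromRows_mul, Matrix.fromRows_mul, e1, e2, e3]
    -- full row rank of the data matrix
    have hMW : (Matrix.fromRows M₁ (Matrix.fromRows M₂ M₃) * W').rank =
        (Matrix.fromRows M₁ (Matrix.fromRows M₂ M₃)).rank := by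
      refine le_antisymm (Matrix.rank_mul_le_left _ _) ?_
      calc (Matrix.fromRows M₁ (Matrix.fromRows M₂ M₃)).rank
          = (Matrix.fromRows M₁ (Matrix.fromRows M₂ M₃) * W' * G.map Complex.ofReal).rank := by
            rw [Matrix.mul_assoc, hW', hWGc, Matrix.mul_one]
        _ ≤ (Matrix.fromRows M₁ (Matrix.fromRows M₂ M₃) * W').rank :=
            Matrix.rank_mul_le_left _ _
    -- eliminate B by left multiplication with an invertible matrix
    have hLdet : IsUnit (Matrix.fromBlocks (1 : Matrix (Fin n) (Fin n) ℂ)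
        (Matrix.fromCols B' (0 : Matrix (Fin n) (Fin p) ℂ)) 0
        (1 : Matrix (Fin m ⊕ Fin p) (Fin m ⊕ Fin p) ℂ)).det := by
      rw [Matrix.det_fromBlocks_zero₂₁, Matrix.det_one, Matrix.det_one, one_mul]
      exact isUnit_one
    have hLM : Matrix.fromBlocks (1 : Matrix (Fin n) (Fin n) ℂ)
        (Matrix.fromCols B' (0 : Matrix (Fin n) (Fin p) ℂ)) 0
        (1 : Matrix (Fin m ⊕ Fin p) (Fin m ⊕ Fin p) ℂ)
        * Matrix.fromRows M₁ (Matrix.fromRows M₂ M₃) =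
        Matrix.fromRows (Matrix.fromCols 0 (Matrix.fromCols (-E') Z'))
          (Matrix.fromRows M₂ M₃) := by
      rw [hM₁, hM₂, hM₃]
      simp only [Matrix.fromBlocks_mul_fromRows, Matrix.fromCols_mul_fromRows,
        Matrix.one_mul, Matrix.zero_mul, zero_add, add_zero, Matrix.mul_fromCols,
        Matrix.mul_one, Matrix.mul_zero]
      ext i j
      rcases i with i | i <;> rcases j with j | j | j <;> simp
    have hrankL : (Matrix.fromRows
        (Matrix.fromCols 0 (Matrix.fromCols (-E') Z'))
        (Matrix.fromRows M₂ M₃)).rank =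
        (Matrix.fromRows M₁ (Matrix.fromRows M₂ M₃)).rank := by
      rw [← hLM]
      exact Matrix.rank_mul_eq_right_of_isUnit_det _ _ hLdet
    -- permute the rows to reach a block-diagonal matrix
    let e : Fin m ⊕ (Fin n ⊕ Fin p) ≃ (Fin n ⊕ (Fin m ⊕ Fin p)) :=
      ⟨Sum.elim (fun i => Sum.inr (Sum.inl i)) (Sum.elim Sum.inl (fun i => Sum.inr (Sum.inr i))),
       Sum.elim (fun i => Sum.inr (Sum.inl i)) (Sum.elim Sum.inl (fun i => Sum.inr (Sum.inr i))),
       fun i => by rcases i with i | i | i <;> rfl,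
       fun i => by rcases i with i | i | i <;> rfl⟩
    have hperm : (Matrix.fromRows
        (Matrix.fromCols 0 (Matrix.fromCols (-E') Z'))
        (Matrix.fromRows M₂ M₃)).submatrix e id =
        Matrix.fromBlocks (1 : Matrix (Fin m) (Fin m) ℂ) 0 0 K := by
      rw [hM₂, hM₃, hK]
      ext i j
      rcases i with i | i | i <;> rcases j with j | j | j <;>
        simp [e, Matrix.one_apply]
    have hfinal : (Matrix.fromRows
        (Matrix.fromCols 0 (Matrix.fromCols (-E') Z'))
        (Matrix.fromRows M₂ M₃)).rank = m + K.rank := by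
      rw [← rank_submatrix_equiv_id (Matrix.fromRows
        (Matrix.fromCols 0 (Matrix.fromCols (-E') Z'))
        (Matrix.fromRows M₂ M₃)) e, hperm, rank_fromBlocks_diag, Matrix.rank_one,
        Fintype.card_fin]
    calc (Matrix.fromRows (z • Xp' - Xf') (Matrix.fromRows Up' Yp')).rank
        = (Matrix.fromRows M₁ (Matrix.fromRows M₂ M₃) * W').rank := by rw [hfact]
      _ = (Matrix.fromRows M₁ (Matrix.fromRows M₂ M₃)).rank := hMW
      _ = m + K.rank := by rw [← hrankL, hfinal]
  refine ⟨key, ?_⟩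
  -- swapping the column blocks does not change the rank
  have hKswap : ∀ z : ℂ,
      (Matrix.fromBlocks
        (z • (1 : Matrix (Fin n) (Fin n) ℂ) - A.map Complex.ofReal)
        (-(E.map Complex.ofReal)) (C.map Complex.ofReal) 0).rank =
      (Matrix.fromBlocks (-(E.map Complex.ofReal))
        (z • (1 : Matrix (Fin n) (Fin n) ℂ) - A.map Complex.ofReal)
        0 (C.map Complex.ofReal)).rank := by
    intro z
    have hmat : (Matrix.fromBlocks
        (z • (1 : Matrix (Fin n) (Fin n) ℂ) - A.map Complex.ofReal)
        (-(E.map Complex.ofReal)) (C.map Complex.ofReal) 0) =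
        (Matrix.fromBlocks (-(E.map Complex.ofReal))
          (z • (1 : Matrix (Fin n) (Fin n) ℂ) - A.map Complex.ofReal)
          0 (C.map Complex.ofReal)).submatrix id (Equiv.sumComm (Fin n) (Fin r)) := by
      ext i j
      rcases i with i | i <;> rcases j with j | j <;> simp
    rw [hmat, rank_id_submatrix_equiv]
  constructor
  · intro h z hz
    have h1z := key z
    have h2z := h z hz
    have h3z := hKswap z
    omega
  · intro h z hz
    have h1z := key z
    have h2z := h z hz
    have h3z := hKswap z
    omega
end
end

section
/- Suppose the historical data are generated by the system Σ, the Assumption holds (the stacked matrix [U_p; D_p; X_p] has full row rank m + r + n), and rank(C·E) = rank(E) = r. Then the stacked data matrix [U_p; Y_p; Y_f; X_p] has rank n + m + r. -/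
open Matrix Filter

noncomputable section

lemma mul_pastMat_apply {k l N : ℕ} (X : Matrix (Fin l) (Fin k) ℝ) (v : ℕ → Fin k → ℝ)
    (i : Fin l) (j : Fin N) : (X * pastMat N v) i j = X.mulVec (v j.val) i := by
  simp [Matrix.mul_apply, Matrix.mulVec, dotProduct, pastMat]

/-- Under the Assumption, if moreover `rank(CE) = rank(E) = r`,
then the stacked data matrix `[U_p; Y_p; Y_f; X_p]` has rank `n + m + r`. -/
theorem statement17 {n m p r N : ℕ}
    (A : Matrix (Fin n) (Fin n) ℝ) (B : Matrix (Fin n) (Fin m) ℝ)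
    (E : Matrix (Fin n) (Fin r) ℝ) (C : Matrix (Fin p) (Fin n) ℝ)
    (hE : E.rank = r) (hCE : (C * E).rank = r)
    (ud : ℕ → Fin m → ℝ) (dd : ℕ → Fin r → ℝ) (xd : ℕ → Fin n → ℝ) (yd : ℕ → Fin p → ℝ)
    (hdata : GeneratedBy A B E C N ud dd xd yd)
    (hAssumption : (Matrix.fromRows (pastMat N ud)
      (Matrix.fromRows (pastMat N dd) (pastMat N xd))).rank = m + r + n) :
    (Matrix.fromRows (pastMat N ud)
      (Matrix.fromRows (pastMat N yd)
        (Matrix.fromRows (futMat N yd) (pastMat N xd)))).rank = n + m + r := by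

  classical
  set Up := pastMat N ud with hUp
  set Dp := pastMat N dd with hDp
  set Xp := pastMat N xd with hXp
  set Yp := pastMat N yd with hYp
  set Yf := futMat N yd with hYf
  set W : Matrix (Fin m ⊕ (Fin r ⊕ Fin n)) (Fin N) ℝ :=
    Matrix.fromRows Up (Matrix.fromRows Dp Xp) with hW
  set M : Matrix (Fin m ⊕ (Fin p ⊕ (Fin p ⊕ Fin n))) (Fin m ⊕ (Fin r ⊕ Fin n)) ℝ :=
    Matrix.fromRows (Matrix.fromCols 1 (Matrix.fromCols 0 0))
      (Matrix.fromRows (Matrix.fromCols 0 (Matrix.fromCols 0 C))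
        (Matrix.fromRows (Matrix.fromCols (C * B) (Matrix.fromCols (C * E) (C * A)))
          (Matrix.fromCols 0 (Matrix.fromCols 0 1)))) with hM
  -- the factorization
  have hYpXp : Yp = C * Xp := by
    ext i j
    rw [mul_pastMat_apply]
    have := hdata.2 j.val (le_of_lt j.isLt)
    simp [hYp, pastMat, this]
  have hYfeq : Yf = C * B * Up + ((C * E) * Dp + (C * A) * Xp) := by
    ext i j
    have hx := hdata.1 j.val j.isLt
    have hy := hdata.2 (j.val + 1) j.isLt
    simp only [Matrix.add_apply, hUp, hDp, hXp]
    rw [mul_pastMat_apply, mul_pastMat_apply, mul_pastMat_apply]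
    simp only [hYf, futMat, Matrix.of_apply]
    rw [hy, hx]
    simp only [Matrix.mulVec_add, Matrix.mulVec_mulVec, Pi.add_apply]
    ring
  have hfact : Matrix.fromRows Up (Matrix.fromRows Yp (Matrix.fromRows Yf Xp)) = M * W := by
    rw [hM, hW, Matrix.fromRows_mul, Matrix.fromRows_mul, Matrix.fromRows_mul,
      Matrix.fromCols_mul_fromRows, Matrix.fromCols_mul_fromRows,
      Matrix.fromCols_mul_fromRows, Matrix.fromCols_mul_fromRows,
      Matrix.fromCols_mul_fromRows, Matrix.fromCols_mul_fromRows,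
      Matrix.fromCols_mul_fromRows, Matrix.fromCols_mul_fromRows]
    simp only [Matrix.one_mul, Matrix.zero_mul, add_zero, zero_add]
    rw [hYpXp, hYfeq]
  -- surjectivity of W
  have hWsurj : Function.Surjective W.mulVecLin := by
    rw [← LinearMap.range_eq_top]
    apply Submodule.eq_top_of_finrank_eq
    have : Module.finrank ℝ (LinearMap.range W.mulVecLin) = W.rank := rfl
    rw [this, hAssumption]
    simp [Module.finrank_fintype_fun_eq_card]
    omega
  -- injectivity of C*E on vectors
  have hCEinj : ∀ vd : Fin r → ℝ, (C * E).mulVec vd = 0 → vd = 0 := by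
    intro vd hvd
    have hrn := LinearMap.finrank_range_add_finrank_ker (C * E).mulVecLin
    have hr : Module.finrank ℝ (LinearMap.range (C * E).mulVecLin) = r := hCE
    rw [hr, Module.finrank_fintype_fun_eq_card, Fintype.card_fin] at hrn
    have hker : Module.finrank ℝ (LinearMap.ker (C * E).mulVecLin) = 0 := by omega
    have : LinearMap.ker (C * E).mulVecLin = ⊥ := Submodule.finrank_eq_zero.mp hker
    have hmem : vd ∈ LinearMap.ker (C * E).mulVecLin := by
      simp [LinearMap.mem_ker, Matrix.mulVecLin_apply, hvd]
    rw [this] at hmem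
    simpa using hmem
  -- injectivity of M
  have hMinj : Function.Injective M.mulVecLin := by
    rw [← LinearMap.ker_eq_bot, LinearMap.ker_eq_bot']
    intro v hv
    have hv' : M.mulVec v = 0 := hv
    have hvrep : v = Sum.elim (v ∘ Sum.inl)
        (Sum.elim (v ∘ Sum.inr ∘ Sum.inl) (v ∘ Sum.inr ∘ Sum.inr)) := by
      funext i; rcases i with i | i | i <;> rfl
    set vu := v ∘ Sum.inl
    set vd := v ∘ Sum.inr ∘ Sum.inl
    set vx := v ∘ Sum.inr ∘ Sum.inr
    rw [hvrep, hM] at hv'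
    simp only [Matrix.fromRows_mulVec, Matrix.fromCols_mulVec_sumElim] at hv'
    have h1 : (1 : Matrix (Fin m) (Fin m) ℝ).mulVec vu +
        ((0 : Matrix (Fin m) (Fin r) ℝ).mulVec vd + (0 : Matrix (Fin m) (Fin n) ℝ).mulVec vx)
        = 0 := by
      funext i; exact congrFun hv' (Sum.inl i)
    have h2 : (C * B).mulVec vu + ((C * E).mulVec vd + (C * A).mulVec vx) = 0 := by
      funext i; exact congrFun hv' (Sum.inr (Sum.inr (Sum.inl i)))
    have h4 : (0 : Matrix (Fin n) (Fin m) ℝ).mulVec vu +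
        ((0 : Matrix (Fin n) (Fin r) ℝ).mulVec vd + (1 : Matrix (Fin n) (Fin n) ℝ).mulVec vx)
        = 0 := by
      funext i; exact congrFun hv' (Sum.inr (Sum.inr (Sum.inr i)))
    have hvu : vu = 0 := by simpa using h1
    have hvx : vx = 0 := by simpa using h4
    have hvd : vd = 0 := by
      apply hCEinj
      rw [hvu, hvx] at h2
      simpa using h2
    rw [hvrep, hvu, hvd, hvx]
    funext i; rcases i with i | i | i <;> rfl
  -- conclude
  rw [hfact]
  have hrank : (M * W).rank = M.rank := by
    show Module.finrank ℝ (LinearMap.range (M * W).mulVecLin) = _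
    rw [Matrix.mulVecLin_mul, LinearMap.range_comp, LinearMap.range_eq_top.mpr hWsurj,
      Submodule.map_top]
    rfl
  rw [hrank]
  show Module.finrank ℝ (LinearMap.range M.mulVecLin) = n + m + r
  rw [LinearMap.finrank_range_of_inj hMinj]
  simp [Module.finrank_fintype_fun_eq_card]
  omega
end
end

section
/- Suppose the historical data are generated by the system Σ and the Assumption holds (the stacked matrix [U_p; D_p; X_p] has full row rank m + r + n). If matrices T_1 ∈ ℝ^{n×m}, T_2, T_3 ∈ ℝ^{n×p}, T_4 ∈ ℝ^{n×n} satisfy X_f = [T_1 | T_2 | T_3 | T_4]·[U_p; Y_p; Y_f; X_p], then the system Σ̂ with matrices A_UIO = T_4, B^u_UIO = T_1, B^y_UIO = T_2 + T_4·T_3, D_UIO = T_3 satisfies T_Σ ⊆ T_Σ̂. Moreover, combined with the converse construction T_1 = B^u_UIO, T_2 = B^y_UIO − A_UIO·D_UIO, T_3 = D_UIO, T_4 = A_UIO, this yields a bijective correspondence between quadruples (A_UIO, B^u_UIO, B^y_UIO, D_UIO) describing a system Σ̂ with T_Σ ⊆ T_Σ̂ and quadruples (T_1, T_2, T_3, T_4)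 solving X_f = [T_1 | T_2 | T_3 | T_4]·[U_p; Y_p; Y_f; X_p]; under this correspondence, T_4 = A_UIO, so quadruples with T_4 Schur stable correspond exactly to UIOs. -/
open Matrix Filter
open scoped ENNReal NNReal

noncomputable section

namespace Stmt18Aux

lemma eq_zero_of_mul_full_rank {I : Type*} [Fintype I] [DecidableEq I] {N q : ℕ}
    (W : Matrix I (Fin N) ℝ) (hW : W.rank = Fintype.card I)
    (M : Matrix (Fin q) I ℝ) (hM : M * W = 0) : M = 0 := by
  have hrt : Wᵀ.rank = Fintype.card I := by rw [Matrix.rank_transpose]; exact hW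
  have hker : LinearMap.ker Wᵀ.mulVecLin = ⊥ := by
    have h1 := Wᵀ.mulVecLin.finrank_range_add_finrank_ker
    rw [Module.finrank_fintype_fun_eq_card] at h1
    have h2 : Module.finrank ℝ (LinearMap.range Wᵀ.mulVecLin) = Fintype.card I := hrt
    rw [h2] at h1
    exact Submodule.finrank_eq_zero.mp (by omega)
  have hinj : Function.Injective Wᵀ.mulVecLin := by
    rw [← LinearMap.ker_eq_bot]; exact hker
  have hrow : ∀ i, Wᵀ.mulVecLin (M i) = Wᵀ.mulVecLin 0 := by
    intro i
    funext k
    have h := congrFun (congrFun hM i) k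
    simp only [Matrix.mul_apply, Matrix.zero_apply] at h
    simp only [Matrix.mulVecLin_apply, Matrix.mulVec_zero, Matrix.mulVec_transpose,
      Matrix.vecMul, dotProduct, Pi.zero_apply]
    exact h
  ext i j
  exact congrFun (hinj (hrow i)) j

lemma tendsto_pow_mulVec_of_schur {n : ℕ} {M : Matrix (Fin n) (Fin n) ℝ}
    (hS : SchurStable M) (v : Fin n → ℝ) :
    Tendsto (fun t => (M ^ t) *ᵥ v) atTop (nhds 0) := by
  classical
  letI : SeminormedAddCommGroup (Matrix (Fin n) (Fin n) ℂ) :=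
    Matrix.linftyOpSeminormedAddCommGroup
  letI : NormedRing (Matrix (Fin n) (Fin n) ℂ) := Matrix.linftyOpNormedRing
  letI : NormedAlgebra ℂ (Matrix (Fin n) (Fin n) ℂ) := Matrix.linftyOpNormedAlgebra
  set Mc : Matrix (Fin n) (Fin n) ℂ := M.map Complex.ofReal with hMc
  have hrad : spectralRadius ℂ Mc < 1 := by
    rcases Set.eq_empty_or_nonempty (spectrum ℂ Mc) with h | h
    · rw [spectralRadius]; simp [h]
    · have h1 : ∀ k ∈ spectrum ℂ Mc, ‖k‖₊ < (1 : NNReal) := by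
        intro k hk
        have := hS k hk
        simpa [← NNReal.coe_lt_coe] using this
      have := spectrum.spectralRadius_lt_of_forall_lt_of_nonempty h h1
      simpa using this
  obtain ⟨ρ, hρ1, hρ2⟩ := ENNReal.lt_iff_exists_nnreal_btwn.mp hrad
  have hρ2' : (ρ : ℝ) < 1 := by exact_mod_cast hρ2
  have hGel := spectrum.pow_nnnorm_pow_one_div_tendsto_nhds_spectralRadius Mc
  have hev : ∀ᶠ t : ℕ in atTop, ((‖Mc ^ t‖₊ : ℝ≥0∞) ^ (1 / (t : ℝ))) < ρ :=
    hGel.eventually_lt_const hρ1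
  have hbound : ∀ᶠ t : ℕ in atTop, ‖Mc ^ t‖ ≤ (ρ : ℝ) ^ t := by
    filter_upwards [hev, eventually_ge_atTop 1] with t ht ht1
    have htne : (t : ℝ) ≠ 0 := by
      exact_mod_cast Nat.one_le_iff_ne_zero.mp ht1
    have h2 : (((‖Mc ^ t‖₊ : ℝ≥0∞) ^ (1 / (t : ℝ))) ^ (t : ℝ)) < (ρ : ℝ≥0∞) ^ (t : ℝ) :=
      ENNReal.rpow_lt_rpow ht (by positivity)
    rw [← ENNReal.rpow_mul, one_div, inv_mul_cancel₀ htne, ENNReal.rpow_one] at h2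
    rw [ENNReal.rpow_natCast, ← ENNReal.coe_pow, ENNReal.coe_lt_coe] at h2
    have h3 : ‖Mc ^ t‖₊ ≤ ρ ^ t := le_of_lt h2
    exact_mod_cast h3
  have hnorm0 : Tendsto (fun t : ℕ => ‖Mc ^ t‖) atTop (nhds 0) :=
    squeeze_zero' (Eventually.of_forall fun t => norm_nonneg _) hbound
      (tendsto_pow_atTop_nhds_zero_of_lt_one ρ.coe_nonneg hρ2')
  rw [tendsto_pi_nhds]
  intro i
  set w : Fin n → ℂ := fun j => (v j : ℂ) with hw
  have hcomp : ∀ t : ℕ, ((Mc ^ t) *ᵥ w) i = (((M ^ t) *ᵥ v) i : ℝ) := by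
    intro t
    have hpow : Mc ^ t = (M ^ t).map Complex.ofReal := by
      have : Mc = Complex.ofRealHom.mapMatrix M := rfl
      rw [this, ← map_pow]; rfl
    rw [hpow]
    exact (RingHom.map_mulVec Complex.ofRealHom (M ^ t) v i).symm
  have hcplx : Tendsto (fun t : ℕ => ((Mc ^ t) *ᵥ w) i) atTop (nhds 0) := by
    rw [tendsto_zero_iff_norm_tendsto_zero]
    apply squeeze_zero (fun t => norm_nonneg _) (g := fun t => ‖Mc ^ t‖ * ‖w‖)
    · intro t
      exact le_trans (norm_le_pi_norm _ i) (Matrix.linfty_opNorm_mulVec _ _)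
    · simpa using hnorm0.mul_const ‖w‖
  have : Tendsto (fun t : ℕ => (((Mc ^ t) *ᵥ w) i).re) atTop (nhds 0) := by
    have := (Complex.continuous_re.tendsto 0).comp hcplx
    simpa [Function.comp_def] using this
  refine this.congr fun t => ?_
  rw [hcomp]
  simp

lemma schur_of_tendsto {n : ℕ} {M : Matrix (Fin n) (Fin n) ℝ}
    (h : ∀ v : Fin n → ℝ, Tendsto (fun t => (M ^ t) *ᵥ v) atTop (nhds 0)) :
    SchurStable M := by
  classical
  intro μ hμ
  by_contra hcon
  push_neg at hcon
  set Mc : Matrix (Fin n) (Fin n) ℂ := M.map Complex.ofReal with hMc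
  have hdet : (algebraMap ℂ (Matrix (Fin n) (Fin n) ℂ) μ - Mc).det = 0 := by
    by_contra hne
    exact (spectrum.mem_iff.mp hμ) ((Matrix.isUnit_iff_isUnit_det _).mpr (Ne.isUnit hne))
  obtain ⟨w, hw0, hww⟩ := Matrix.exists_mulVec_eq_zero_iff.mpr hdet
  have heig : Mc *ᵥ w = μ • w := by
    have h1 : (algebraMap ℂ (Matrix (Fin n) (Fin n) ℂ) μ) *ᵥ w - Mc *ᵥ w = 0 := by
      rw [← Matrix.sub_mulVec]; exact hww
    have h2 : (algebraMap ℂ (Matrix (Fin n) (Fin n) ℂ) μ) *ᵥ w = μ • w := by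
      simp [Algebra.algebraMap_eq_smul_one, Matrix.smul_mulVec]
    rw [h2] at h1
    exact (sub_eq_zero.mp h1).symm
  have heigt : ∀ t : ℕ, (Mc ^ t) *ᵥ w = μ ^ t • w := by
    intro t
    induction t with
    | zero => simp
    | succ t ih =>
      rw [pow_succ', ← Matrix.mulVec_mulVec, ih, Matrix.mulVec_smul, heig,
        smul_smul, ← pow_succ]
  obtain ⟨i, hi⟩ : ∃ i, w i ≠ 0 := by
    by_contra hc
    push_neg at hc
    exact hw0 (funext hc)
  have hent : ∀ t : ℕ, (∑ j, (((M ^ t) i j : ℝ) : ℂ) * w j) = μ ^ t * w i := by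
    intro t
    have h1 := congrFun (heigt t) i
    have hpow : Mc ^ t = (M ^ t).map Complex.ofReal := by
      have h0 : Mc = Complex.ofRealHom.mapMatrix M := rfl
      rw [h0, ← map_pow]; rfl
    rw [hpow] at h1
    simpa [Matrix.mulVec, dotProduct, Matrix.map_apply] using h1
  have hcoef : ∀ j, Tendsto (fun t : ℕ => (M ^ t) i j) atTop (nhds 0) := by
    intro j
    have hj := tendsto_pi_nhds.mp (h (Pi.single j 1)) i
    exact hj.congr fun t => by simp [Matrix.mulVec_single]
  have hLHS : Tendsto (fun t : ℕ => μ ^ t * w i) atTop (nhds 0) := by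
    have hsum : Tendsto (fun t : ℕ => ∑ j, (((M ^ t) i j : ℝ) : ℂ) * w j) atTop (nhds 0) := by
      have : Tendsto (fun t : ℕ => ∑ j, (((M ^ t) i j : ℝ) : ℂ) * w j) atTop
          (nhds (∑ j : Fin n, (((0 : ℝ) : ℂ)) * w j)) := by
        apply tendsto_finset_sum
        intro j _
        exact ((Complex.continuous_ofReal.tendsto 0).comp (hcoef j)).mul_const (w j)
      simpa using this
    exact hsum.congr hent
  have hbig : ∀ t : ℕ, ‖w i‖ ≤ ‖μ ^ t * w i‖ := by
    intro t
    rw [norm_mul, norm_pow]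
    calc ‖w i‖ = 1 * ‖w i‖ := (one_mul _).symm
      _ ≤ ‖μ‖ ^ t * ‖w i‖ :=
        mul_le_mul_of_nonneg_right (one_le_pow₀ hcon) (norm_nonneg _)
  have h0 : 0 < ‖w i‖ := norm_pos_iff.mpr hi
  have hevent : ∀ᶠ t : ℕ in atTop, ‖μ ^ t * w i‖ < ‖w i‖ :=
    (tendsto_zero_iff_norm_tendsto_zero.mp hLHS).eventually_lt_const h0
  obtain ⟨t, ht⟩ := hevent.exists
  exact absurd ht (not_lt.mpr (hbig t))

end Stmt18Aux

/-- **Corollary 1.** Under the Assumption: any solution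
`(T_1, T_2, T_3, T_4)` of `X_f = [T_1 | T_2 | T_3 | T_4] [U_p; Y_p; Y_f; X_p]`
yields a system `Σ̂` with matrices `A_UIO = T_4`, `B^u_UIO = T_1`,
`B^y_UIO = T_2 + T_4 T_3`, `D_UIO = T_3` satisfying `T_Σ ⊆ T_Σ̂`; conversely any
`Σ̂` with `T_Σ ⊆ T_Σ̂` yields a solution via `T_1 = B^u_UIO`,
`T_2 = B^y_UIO - A_UIO D_UIO`, `T_3 = D_UIO`, `T_4 = A_UIO` (the two maps being
mutually inverse, this is a bijective correspondence); and under it, since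
`T_4 = A_UIO`, solutions with `T_4` Schur stable correspond exactly to UIOs. -/
theorem statement18 {n m p r N : ℕ}
    (A : Matrix (Fin n) (Fin n) ℝ) (B : Matrix (Fin n) (Fin m) ℝ)
    (E : Matrix (Fin n) (Fin r) ℝ) (C : Matrix (Fin p) (Fin n) ℝ)
    (hE : E.rank = r)
    (ud : ℕ → Fin m → ℝ) (dd : ℕ → Fin r → ℝ) (xd : ℕ → Fin n → ℝ) (yd : ℕ → Fin p → ℝ)
    (hdata : GeneratedBy A B E C N ud dd xd yd)
    (hAssumption : (Matrix.fromRows (pastMat N ud)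
      (Matrix.fromRows (pastMat N dd) (pastMat N xd))).rank = m + r + n) :
    (∀ (T1 : Matrix (Fin n) (Fin m) ℝ) (T2 T3 : Matrix (Fin n) (Fin p) ℝ)
        (T4 : Matrix (Fin n) (Fin n) ℝ),
      futMat N xd = T1 * pastMat N ud + T2 * pastMat N yd +
          T3 * futMat N yd + T4 * pastMat N xd →
        TSigma A B E C ⊆ TObs T4 T1 (T2 + T4 * T3) T3) ∧
    (∀ (Auio : Matrix (Fin n) (Fin n) ℝ) (Bu : Matrix (Fin n) (Fin m) ℝ)
        (By Duio : Matrix (Fin n) (Fin p) ℝ),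
      TSigma A B E C ⊆ TObs Auio Bu By Duio →
        futMat N xd = Bu * pastMat N ud + (By - Auio * Duio) * pastMat N yd +
          Duio * futMat N yd + Auio * pastMat N xd) ∧
    (∀ (T1 : Matrix (Fin n) (Fin m) ℝ) (T2 T3 : Matrix (Fin n) (Fin p) ℝ)
        (T4 : Matrix (Fin n) (Fin n) ℝ),
      futMat N xd = T1 * pastMat N ud + T2 * pastMat N yd +
          T3 * futMat N yd + T4 * pastMat N xd →
        (SchurStable T4 ↔ IsUIO A B E C T4 T1 (T2 + T4 * T3) T3)) := by

  classical
  have hXf : futMat N xd = A * pastMat N xd + B * pastMat N ud + E * pastMat N dd := by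
    ext i j
    have h := congrFun (hdata.1 j.val j.isLt) i
    simpa [futMat, pastMat, Matrix.add_apply, Matrix.mul_apply, Matrix.mulVec,
      dotProduct] using h
  have hYp : pastMat N yd = C * pastMat N xd := by
    ext i j
    have h := congrFun (hdata.2 j.val (le_of_lt j.isLt)) i
    simpa [pastMat, Matrix.mul_apply, Matrix.mulVec, dotProduct] using h
  have hYf : futMat N yd = C * futMat N xd := by
    ext i j
    have h := congrFun (hdata.2 (j.val + 1) (Nat.succ_le_of_lt j.isLt)) i
    simpa [futMat, Matrix.mul_apply, Matrix.mulVec, dotProduct] using h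
  have keyIds : ∀ (T1 : Matrix (Fin n) (Fin m) ℝ) (T2 T3 : Matrix (Fin n) (Fin p) ℝ)
      (T4 : Matrix (Fin n) (Fin n) ℝ),
      futMat N xd = T1 * pastMat N ud + T2 * pastMat N yd + T3 * futMat N yd
        + T4 * pastMat N xd →
      (1 - T3 * C) * B = T1 ∧ (1 - T3 * C) * E = 0 ∧ (1 - T3 * C) * A = T2 * C + T4 := by
    intro T1 T2 T3 T4 hT
    rw [hYp, hYf, hXf] at hT
    have hsub : (B - T1 - T3 * C * B) * pastMat N ud + ((E - T3 * C * E) * pastMat N dd +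
        (A - T2 * C - T3 * C * A - T4) * pastMat N xd) = 0 := by
      have hexp : (B - T1 - T3 * C * B) * pastMat N ud + ((E - T3 * C * E) * pastMat N dd +
          (A - T2 * C - T3 * C * A - T4) * pastMat N xd)
          = (A * pastMat N xd + B * pastMat N ud + E * pastMat N dd) -
            (T1 * pastMat N ud + T2 * (C * pastMat N xd) +
              T3 * (C * (A * pastMat N xd + B * pastMat N ud + E * pastMat N dd))
              + T4 * pastMat N xd) := by
        simp only [Matrix.sub_mul, Matrix.add_mul, Matrix.mul_add, Matrix.mul_assoc]
        abel
      rw [hexp, sub_eq_zero]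
      exact hT
    have hcard : (Matrix.fromRows (pastMat N ud)
        (Matrix.fromRows (pastMat N dd) (pastMat N xd))).rank
        = Fintype.card (Fin m ⊕ (Fin r ⊕ Fin n)) := by
      simp only [Fintype.card_sum, Fintype.card_fin]
      rw [hAssumption]
      omega
    have hGW : Matrix.fromCols (B - T1 - T3 * C * B)
        (Matrix.fromCols (E - T3 * C * E) (A - T2 * C - T3 * C * A - T4)) *
        Matrix.fromRows (pastMat N ud) (Matrix.fromRows (pastMat N dd) (pastMat N xd)) = 0 := by
      rw [Matrix.fromCols_mul_fromRows, Matrix.fromCols_mul_fromRows]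
      exact hsub
    have hG0 := Stmt18Aux.eq_zero_of_mul_full_rank _ hcard _ hGW
    refine ⟨?_, ?_, ?_⟩
    · have h2 : B - T1 - T3 * C * B = 0 := by
        ext i j
        have := congrFun (congrFun hG0 i) (Sum.inl j)
        simpa [Matrix.fromCols] using this
      calc (1 - T3 * C) * B = (B - T1 - T3 * C * B) + T1 := by
            simp only [Matrix.sub_mul, Matrix.one_mul, Matrix.mul_assoc]
            abel
        _ = T1 := by rw [h2, zero_add]
    · have h2 : E - T3 * C * E = 0 := by
        ext i j
        have := congrFun (congrFun hG0 i) (Sum.inr (Sum.inl j))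
        simpa [Matrix.fromCols] using this
      calc (1 - T3 * C) * E = E - T3 * C * E := by
            simp only [Matrix.sub_mul, Matrix.one_mul, Matrix.mul_assoc]
        _ = 0 := h2
    · have h2 : A - T2 * C - T3 * C * A - T4 = 0 := by
        ext i j
        have := congrFun (congrFun hG0 i) (Sum.inr (Sum.inr j))
        simpa [Matrix.fromCols] using this
      calc (1 - T3 * C) * A = (A - T2 * C - T3 * C * A - T4) + (T2 * C + T4) := by
            simp only [Matrix.sub_mul, Matrix.one_mul, Matrix.mul_assoc]
            abel
        _ = T2 * C + T4 := by rw [h2, zero_add]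
  have step : ∀ (T1 : Matrix (Fin n) (Fin m) ℝ) (T2 T3 : Matrix (Fin n) (Fin p) ℝ)
      (T4 : Matrix (Fin n) (Fin n) ℝ),
      (1 - T3 * C) * B = T1 → (1 - T3 * C) * E = 0 → (1 - T3 * C) * A = T2 * C + T4 →
      ∀ (u : ℕ → Fin m → ℝ) (y : ℕ → Fin p → ℝ) (x : ℕ → Fin n → ℝ) (d : ℕ → Fin r → ℝ),
      IsSysTraj A B E C u y x d → ∀ t : ℕ,
      x (t + 1) - T3 *ᵥ y (t + 1)
        = T4 *ᵥ (x t - T3 *ᵥ y t) + T1 *ᵥ u t + (T2 + T4 * T3) *ᵥ y t := by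
    intro T1 T2 T3 T4 id2 id3 id1 u y x d htraj t
    have hP : ∀ v : Fin n → ℝ, (1 - T3 * C) *ᵥ v = v - T3 *ᵥ (C *ᵥ v) := by
      intro v
      rw [Matrix.sub_mulVec, Matrix.one_mulVec, Matrix.mulVec_mulVec]
    have hy0 := (htraj t).2
    have hy1 : y (t + 1) = C *ᵥ x (t + 1) := (htraj (t + 1)).2
    have hx1 := (htraj t).1
    rw [hy1, hy0, ← hP, ← hP, hx1]
    calc (1 - T3 * C) *ᵥ (A *ᵥ x t + B *ᵥ u t + E *ᵥ d t)
        = ((1 - T3 * C) * A) *ᵥ x t + ((1 - T3 * C) * B) *ᵥ u t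
          + ((1 - T3 * C) * E) *ᵥ d t := by
          simp [Matrix.mulVec_add, Matrix.mulVec_mulVec]
      _ = (T2 * C + T4) *ᵥ x t + T1 *ᵥ u t := by
          rw [id1, id2, id3]; simp
      _ = T4 *ᵥ ((1 - T3 * C) *ᵥ x t) + T1 *ᵥ u t + (T2 + T4 * T3) *ᵥ (C *ᵥ x t) := by
          rw [Matrix.mulVec_mulVec, Matrix.mulVec_mulVec]
          have hkey : (T2 * C + T4 : Matrix (Fin n) (Fin n) ℝ)
              = T4 * (1 - T3 * C) + (T2 + T4 * T3) * C := by
            simp only [Matrix.mul_sub, Matrix.mul_one, Matrix.add_mul, Matrix.mul_assoc]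
            abel
          rw [hkey, Matrix.add_mulVec]
          abel
  refine ⟨?_, ?_, ?_⟩
  · intro T1 T2 T3 T4 hT w hw
    obtain ⟨id2, id3, id1⟩ := keyIds T1 T2 T3 T4 hT
    obtain ⟨d, htraj⟩ := hw
    refine ⟨fun t => w.2.2 t - T3 *ᵥ w.2.1 t, fun t => ⟨?_, ?_⟩⟩
    · exact step T1 T2 T3 T4 id2 id3 id1 w.1 w.2.1 w.2.2 d htraj t
    · simp
  · intro Auio Bu By Duio hsub
    have hcol : ∀ j : Fin N, xd (j.val + 1)
        = Bu *ᵥ ud j.val + (By - Auio * Duio) *ᵥ yd j.val + Duio *ᵥ yd (j.val + 1)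
          + Auio *ᵥ xd j.val := by
      intro j
      set u : ℕ → Fin m → ℝ := fun t => if t = 0 then ud j.val else 0 with hu
      set d : ℕ → Fin r → ℝ := fun t => if t = 0 then dd j.val else 0 with hd
      set x : ℕ → Fin n → ℝ := fun t => Nat.rec (xd j.val)
        (fun s xs => A *ᵥ xs + B *ᵥ u s + E *ᵥ d s) t with hx
      set y : ℕ → Fin p → ℝ := fun t => C *ᵥ x t with hy
      have htraj : IsSysTraj A B E C u y x d := fun t => ⟨rfl, rfl⟩
      obtain ⟨z, hz⟩ := hsub (show ((u, y, x) : (ℕ → Fin m → ℝ) × (ℕ → Fin p → ℝ) ×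
        (ℕ → Fin n → ℝ)) ∈ TSigma A B E C from ⟨d, htraj⟩)
      have hz' : IsObsTraj Auio Bu By Duio u y x z := hz
      have hx1 : x 1 = xd (j.val + 1) := by
        have h1 : x 1 = A *ᵥ xd j.val + B *ᵥ ud j.val + E *ᵥ dd j.val := by
          show A *ᵥ x 0 + B *ᵥ u 0 + E *ᵥ d 0 = _
          simp [hu, hd, hx]
        rw [h1, ← hdata.1 j.val j.isLt]
      have hy0 : y 0 = yd j.val := by
        show C *ᵥ x 0 = yd j.val
        rw [show x 0 = xd j.val from rfl, ← hdata.2 j.val (le_of_lt j.isLt)]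
      have hy1 : y 1 = yd (j.val + 1) := by
        show C *ᵥ x 1 = _
        rw [hx1, ← hdata.2 (j.val + 1) (Nat.succ_le_of_lt j.isLt)]
      have e1 := (hz' 1).2
      have er := (hz' 0).1
      have hz0 : z 0 = x 0 - Duio *ᵥ y 0 := by rw [(hz' 0).2]; abel
      have hu0 : u 0 = ud j.val := by simp [hu]
      rw [← hx1, ← hy0, ← hy1, ← hu0, show xd j.val = x 0 from rfl]
      rw [e1, er, hz0]
      simp only [Matrix.mulVec_sub, Matrix.sub_mulVec, Matrix.mulVec_mulVec]
      abel
    ext i j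
    have h := congrFun (hcol j) i
    simp only [Matrix.add_apply, Matrix.sub_apply, Matrix.mul_apply, futMat, pastMat,
      Matrix.of_apply, Matrix.mulVec, dotProduct, Pi.add_apply, Pi.sub_apply] at h ⊢
    exact h
  · intro T1 T2 T3 T4 hT
    obtain ⟨id2, id3, id1⟩ := keyIds T1 T2 T3 T4 hT
    constructor
    · intro hS u y x d xhat z hsys hobs
      have hstep1 : ∀ t : ℕ, x (t + 1) - xhat (t + 1) = T4 *ᵥ (x t - xhat t) := by
        intro t
        have h1 := step T1 T2 T3 T4 id2 id3 id1 u y x d hsys t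
        have h2 := (hobs t).1
        have h3 := (hobs (t + 1)).2
        have h4 := (hobs t).2
        rw [h3, h4]
        calc x (t + 1) - (z (t + 1) + T3 *ᵥ y (t + 1))
            = (x (t + 1) - T3 *ᵥ y (t + 1)) - z (t + 1) := by abel
          _ = (T4 *ᵥ (x t - T3 *ᵥ y t) + T1 *ᵥ u t + (T2 + T4 * T3) *ᵥ y t)
              - (T4 *ᵥ z t + T1 *ᵥ u t + (T2 + T4 * T3) *ᵥ y t) := by rw [h1, h2]
          _ = T4 *ᵥ (x t - T3 *ᵥ y t) - T4 *ᵥ z t := by abel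
          _ = T4 *ᵥ (x t - (z t + T3 *ᵥ y t)) := by
              simp only [Matrix.mulVec_sub, Matrix.mulVec_add]
              abel
      have herr : ∀ t : ℕ, x t - xhat t = (T4 ^ t) *ᵥ (x 0 - xhat 0) := by
        intro t
        induction t with
        | zero => simp [Matrix.one_mulVec]
        | succ t ih => rw [hstep1 t, ih, Matrix.mulVec_mulVec, ← pow_succ']
      have htend := Stmt18Aux.tendsto_pow_mulVec_of_schur hS (x 0 - xhat 0)
      exact htend.congr fun t => (herr t).symm
    · intro hU
      apply Stmt18Aux.schur_of_tendsto
      intro v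
      have hsys : IsSysTraj A B E C (fun _ => 0) (fun _ => 0) (fun _ => 0) (fun _ => 0) := by
        intro t; constructor <;> simp [Matrix.mulVec_zero]
      have hobs : IsObsTraj T4 T1 (T2 + T4 * T3) T3 (fun _ => 0) (fun _ => 0)
          (fun t => (T4 ^ t) *ᵥ v) (fun t => (T4 ^ t) *ᵥ v) := by
        intro t
        refine ⟨?_, ?_⟩
        · show (T4 ^ (t + 1)) *ᵥ v = _
          simp [Matrix.mulVec_zero, Matrix.mulVec_mulVec, pow_succ']
        · simp [Matrix.mulVec_zero]
      have h0 := hU (fun _ => 0) (fun _ => 0) (fun _ => 0) (fun _ => 0)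
        (fun t => (T4 ^ t) *ᵥ v) (fun t => (T4 ^ t) *ᵥ v) hsys hobs
      have h1 : Tendsto (fun t : ℕ => -((T4 ^ t) *ᵥ v)) atTop (nhds 0) := by
        refine h0.congr fun t => ?_
        show (fun _ : ℕ => (0 : Fin n → ℝ)) t - (T4 ^ t) *ᵥ v = _
        simp
      have h2 := h1.neg
      simpa using h2
end
end

section
/- Suppose the historical data are generated by the system Σ. Then there exist matrices T_1 ∈ ℝ^{n×m}, T_2, T_3 ∈ ℝ^{n×p}, T_4 ∈ ℝ^{n×n} with T_4 Schur stable such that X_f = [T_1 | T_2 | T_3 | T_4]·[U_p; Y_p; Y_f; X_p], if and only if there exist matrices T_1 ∈ ℝ^{n×m}, T_3 ∈ ℝ^{n×p}, T* ∈ ℝ^{n×n} such that X_f = [T_1 | T_3 | T*]·[U_p; Y_f; X_p] and the pair (T*, C) is detectable in the sense that there exists T_2 ∈ ℝ^{n×p} for which T* − T_2·C is Schur stable. -/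
open Matrix Filter

noncomputable section

/-- If the historical data are generated by `Σ`, then there exist
`T_1, T_2, T_3, T_4` with `T_4` Schur stable solving
`X_f = [T_1 | T_2 | T_3 | T_4] [U_p; Y_p; Y_f; X_p]` if and only if there exist
`T_1, T_3, T*` solving `X_f = [T_1 | T_3 | T*] [U_p; Y_f; X_p]` with the pair
`(T*, C)` detectable, i.e. `T* - T_2 C` Schur stable for some `T_2`. -/
theorem statement19 {n m p r N : ℕ}
    (A : Matrix (Fin n) (Fin n) ℝ) (B : Matrix (Fin n) (Fin m) ℝ)
    (E : Matrix (Fin n) (Fin r) ℝ) (C : Matrix (Fin p) (Fin n) ℝ)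
    (hE : E.rank = r)
    (ud : ℕ → Fin m → ℝ) (dd : ℕ → Fin r → ℝ) (xd : ℕ → Fin n → ℝ) (yd : ℕ → Fin p → ℝ)
    (hdata : GeneratedBy A B E C N ud dd xd yd) :
    (∃ (T1 : Matrix (Fin n) (Fin m) ℝ) (T2 T3 : Matrix (Fin n) (Fin p) ℝ)
      (T4 : Matrix (Fin n) (Fin n) ℝ),
      SchurStable T4 ∧
      futMat N xd = T1 * pastMat N ud + T2 * pastMat N yd +
        T3 * futMat N yd + T4 * pastMat N xd) ↔
    (∃ (T1 : Matrix (Fin n) (Fin m) ℝ) (T3 : Matrix (Fin n) (Fin p) ℝ)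
      (Tstar : Matrix (Fin n) (Fin n) ℝ),
      futMat N xd = T1 * pastMat N ud + T3 * futMat N yd + Tstar * pastMat N xd ∧
      ∃ T2 : Matrix (Fin n) (Fin p) ℝ, SchurStable (Tstar - T2 * C)) := by
  have hYp : pastMat N yd = C * pastMat N xd := by
    ext i j
    have := hdata.2 j.val (le_of_lt j.isLt)
    simp [pastMat, Matrix.mul_apply, this, Matrix.mulVec]
    rfl
  constructor
  · rintro ⟨T1, T2, T3, T4, hS, hEq⟩
    refine ⟨T1, T3, T4 + T2 * C, ?_, T2, by simpa using hS⟩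
    rw [hEq, hYp]
    simp only [Matrix.add_mul, Matrix.sub_mul, Matrix.mul_assoc]; abel
  · rintro ⟨T1, T3, Tstar, hEq, T2, hS⟩
    refine ⟨T1, T2, T3, Tstar - T2 * C, hS, ?_⟩
    rw [hEq, hYp]
    simp only [Matrix.add_mul, Matrix.sub_mul, Matrix.mul_assoc]; abel
end
end
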